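/- Define Δ(u) := log(−log u) for u ∈ (0,1) and κ_k(a,b) := (1/(b−a)) ∫_a^b Δ(u)^k du. Suppose 0 ≤ a₂ ≤ a₁ < b̄₂ ≤ b̄₁ ≤ 1 (writing v̄ := 1 − v). Set ζ(a₁, b̄₂) := κ₁(a₁, b̄₁)² − 2·κ₁(a₁, b̄₁)·κ₁(a₂, b̄₂) + κ₂(a₂, b̄₂), ζ(a₂, b̄₂) := κ₂(a₂, b̄₂) − κ₁(a₂, b̄₂)², and ζ_r := ζ(a₂, b̄₂)/ζ(a₁, b̄₂). For any real β and σ > 0, define T₁ := log σ − β·κ₁(a₁, b̄₁) and T₂ := (log σ)² − 2β·(log σ)·κ₁(a₂, b̄₂) + β²·κ₂(a₂, b̄₂). Then T₂ − ζ_r·T₁² ≥ 0. -/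

import Mathlib

/-!
The Fréchet moments reduce to `T₁ = x - β d`, `T₂ = x² + β² V` and `ζ(a₁, b̄₂) = d² + V`, where
`x = log σ - β κ₁(a₂, b̄₂)`, `d = κ₁(a₁, b̄₁) - κ₁(a₂, b̄₂)` and `V = ζ(a₂, b̄₂) = κ₂ - κ₁²` is the
variance of `Δ` under the uniform law on `(a₂, b̄₂)`. Then `T₂ ζ(a₁, b̄₂) - V T₁² = (x d + β V)²`,
and `V ≥ 0` by Jensen's inequality, which needs `Δ² ∈ L¹(0, 1)`: this follows from
`|Δ(u)| ≤ |log u| + |log (1 - u)|`.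
-/

open MeasureTheory Set

/-- `Δ(u) = log(-log u)`. -/
noncomputable def DeltaF (u : ℝ) : ℝ := Real.log (-Real.log u)

/-- `κ_k(a,b) = (1/(b-a)) ∫_a^b Δ(u)^k du`. -/
noncomputable def kappaF (k : ℕ) (a b : ℝ) : ℝ :=
  (b - a)⁻¹ * ∫ u in a..b, (DeltaF u) ^ k

theorem sq_setAverage_le_setAverage_sq {α : Type*} [MeasurableSpace α] {μ : Measure α}
    {s : Set α} {f : α → ℝ} (h0 : μ s ≠ 0) (hs : μ s ≠ ⊤)
    (hf : AEStronglyMeasurable f (μ.restrict s)) (hf2 : IntegrableOn (fun x => f x ^ 2) s μ) :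
    (⨍ x in s, f x ∂μ) ^ 2 ≤ ⨍ x in s, f x ^ 2 ∂μ := by
  have : IsFiniteMeasure (μ.restrict s) := isFiniteMeasure_restrict.2 hs
  have hf1 : IntegrableOn f s μ :=
    ((memLp_two_iff_integrable_sq hf).2 hf2).integrable one_le_two
  exact (even_two.convexOn_pow (𝕜 := ℝ)).map_set_average_le (continuous_pow 2).continuousOn
    isClosed_univ h0 hs (by simp) hf1 hf2

theorem Real.log_sq_le_rpow {x : ℝ} (hx0 : 0 < x) (hx1 : x ≤ 1) :
    Real.log x ^ 2 ≤ 16 * x ^ (-(1 / 2 : ℝ)) := by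
  have hlog := Real.abs_log_mul_self_rpow_lt x (1 / 4) hx0 hx1 (by norm_num)
  have hx : x ^ (-(1 / 2 : ℝ)) * (x ^ (1 / 4 : ℝ)) ^ 2 = 1 := by
    rw [← Real.rpow_natCast, ← Real.rpow_mul hx0.le, ← Real.rpow_add hx0]
    norm_num
  have hsq : (Real.log x * x ^ (1 / 4 : ℝ)) ^ 2 ≤ 16 := by
    nlinarith [sq_abs (Real.log x * x ^ (1 / 4 : ℝ)), abs_nonneg (Real.log x * x ^ (1 / 4 : ℝ))]
  calc Real.log x ^ 2 = x ^ (-(1 / 2 : ℝ)) * (Real.log x * x ^ (1 / 4 : ℝ)) ^ 2 := by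
        rw [mul_pow, mul_left_comm, hx, mul_one]
    _ ≤ 16 * x ^ (-(1 / 2 : ℝ)) := by
        rw [mul_comm 16]
        exact mul_le_mul_of_nonneg_left hsq (by positivity)

theorem measurable_deltaF : Measurable DeltaF :=
  Real.measurable_log.comp Real.measurable_log.neg

theorem abs_deltaF_le {u : ℝ} (hu0 : 0 < u) (hu1 : u < 1) :
    |DeltaF u| ≤ |Real.log u| + |Real.log (1 - u)| := by
  have hlog : 0 < -Real.log u := neg_pos.2 (Real.log_neg hu0 hu1)
  have upper : DeltaF u ≤ -Real.log u := by
    linarith [Real.log_le_sub_one_of_pos hlog, show DeltaF u = Real.log (-Real.log u) from rfl]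
  have lower : Real.log (1 - u) ≤ DeltaF u :=
    Real.log_le_log (by linarith) (by linarith [Real.log_le_sub_one_of_pos hu0])
  rw [abs_le]
  constructor <;>
    linarith [neg_abs_le (Real.log (1 - u)), le_abs_self (-Real.log u), abs_neg (Real.log u),
      abs_nonneg (Real.log u), abs_nonneg (Real.log (1 - u))]

theorem deltaF_sq_le {u : ℝ} (hu0 : 0 < u) (hu1 : u < 1) :
    DeltaF u ^ 2 ≤ 32 * (u ^ (-(1 / 2 : ℝ)) + (1 - u) ^ (-(1 / 2 : ℝ))) := by
  have h := abs_deltaF_le hu0 hu1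
  have hlog := Real.log_sq_le_rpow hu0 hu1.le
  have hlog' := Real.log_sq_le_rpow (x := 1 - u) (by linarith) (by linarith)
  rw [← sq_abs] at hlog hlog' ⊢
  nlinarith [abs_nonneg (DeltaF u), sq_nonneg (|Real.log u| - |Real.log (1 - u)|)]

theorem integrableOn_deltaF_sq : IntegrableOn (fun u => DeltaF u ^ 2) (Ioc 0 1) := by
  have hrpow : IntervalIntegrable (fun x : ℝ => x ^ (-(1 / 2 : ℝ))) volume 0 1 :=
    intervalIntegral.intervalIntegrable_rpow' (by norm_num)
  have hbound : IntegrableOn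
      (fun u : ℝ => 32 * (u ^ (-(1 / 2 : ℝ)) + (1 - u) ^ (-(1 / 2 : ℝ)))) (Ioc 0 1) := by
    have hrpow' := (hrpow.comp_sub_left 1).symm
    simp only [sub_self, sub_zero] at hrpow'
    exact ((intervalIntegrable_iff_integrableOn_Ioc_of_le zero_le_one).1
      ((hrpow.add hrpow').const_mul 32))
  rw [IntegrableOn, ← Measure.restrict_congr_set Ioo_ae_eq_Ioc] at hbound ⊢
  refine hbound.mono' ?_ ((ae_restrict_iff' measurableSet_Ioo).2 (ae_of_all _ ?_))
  · exact (measurable_deltaF.pow_const 2).aestronglyMeasurable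
  · intro u hu
    rw [Real.norm_eq_abs, abs_of_nonneg (sq_nonneg _)]
    exact deltaF_sq_le hu.1 hu.2

theorem sq_kappaF_one_le_kappaF_two {a b : ℝ} (ha : 0 ≤ a) (hab : a < b) (hb : b ≤ 1) :
    kappaF 1 a b ^ 2 ≤ kappaF 2 a b := by
  have hkappa (k : ℕ) : kappaF k a b = ⨍ u in Ioc a b, DeltaF u ^ k := by
    rw [kappaF, ← smul_eq_mul, ← interval_average_eq, uIoc_of_le hab.le]
  simp only [hkappa, pow_one]
  refine sq_setAverage_le_setAverage_sq (by simpa using hab) (by simp)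
    measurable_deltaF.aestronglyMeasurable ?_
  exact integrableOn_deltaF_sq.mono_set (Ioc_subset_Ioc ha hb)

theorem sub_div_mul_nonneg {p q r s : ℝ} (hp : 0 ≤ p) (hr : 0 ≤ r) (h : q * s ≤ p * r) :
    0 ≤ p - q / r * s := by
  rcases hr.eq_or_lt with rfl | hr
  · simpa using hp
  · rw [sub_nonneg, div_mul_eq_mul_div, div_le_iff₀ hr]
    exact h

theorem frechet_T2_sub_zetaR_T1_sq_nonneg_general (a1 a2 b1 b2 : ℝ)
    (h0 : 0 ≤ a2) (h1 : a2 ≤ a1) (h2 : a1 < 1 - b2) (h3 : 1 - b2 ≤ 1 - b1)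
    (h4 : 1 - b1 ≤ 1)
    (ζ12 ζ22 ζr : ℝ)
    (hζ12 : ζ12 = (kappaF 1 a1 (1 - b1)) ^ 2
        - 2 * kappaF 1 a1 (1 - b1) * kappaF 1 a2 (1 - b2)
        + kappaF 2 a2 (1 - b2))
    (hζ22 : ζ22 = kappaF 2 a2 (1 - b2) - (kappaF 1 a2 (1 - b2)) ^ 2)
    (hζr : ζr = ζ22 / ζ12)
    (β σ : ℝ) (T1 T2 : ℝ)
    (hT1 : T1 = Real.log σ - β * kappaF 1 a1 (1 - b1))
    (hT2 : T2 = (Real.log σ) ^ 2 - 2 * β * Real.log σ * kappaF 1 a2 (1 - b2)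
        + β ^ 2 * kappaF 2 a2 (1 - b2)) :
    0 ≤ T2 - ζr * T1 ^ 2 := by
  set x := Real.log σ - β * kappaF 1 a2 (1 - b2)
  set d := kappaF 1 a1 (1 - b1) - kappaF 1 a2 (1 - b2)
  have hV : 0 ≤ ζ22 := hζ22 ▸ sub_nonneg.2
    (sq_kappaF_one_le_kappaF_two h0 (h1.trans_lt h2) (h3.trans h4))
  have hT1' : T1 = x - β * d := by rw [hT1]; ring
  have hT2' : T2 = x ^ 2 + β ^ 2 * ζ22 := by rw [hT2, hζ22]; ring
  have hζ12' : ζ12 = d ^ 2 + ζ22 := by rw [hζ12, hζ22]; ring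
  rw [hζr]
  refine sub_div_mul_nonneg (hT2' ▸ by positivity) (hζ12' ▸ by positivity) ?_
  rw [hT1', hT2', hζ12']
  nlinarith [sq_nonneg (x * d + β * ζ22)]

/-- For the Fréchet population trimmed log-moments
`T₁ = log σ - β·κ₁(a₁,b̄₁)` and `T₂ = (log σ)² - 2β·(log σ)·κ₁(a₂,b̄₂) + β²·κ₂(a₂,b̄₂)`,
one has `T₂ - ζ_r·T₁² ≥ 0` for any real `β` and `σ > 0`, with
`ζ_r = ζ(a₂,b̄₂)/ζ(a₁,b̄₂)` and `0 ≤ a₂ ≤ a₁ < b̄₂ ≤ b̄₁ ≤ 1`. -/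
theorem frechet_T2_sub_zetaR_T1_sq_nonneg (a1 a2 b1 b2 : ℝ)
    (h0 : 0 ≤ a2) (h1 : a2 ≤ a1) (h2 : a1 < 1 - b2) (h3 : 1 - b2 ≤ 1 - b1)
    (h4 : 1 - b1 ≤ 1)
    (ζ12 ζ22 ζr : ℝ)
    (hζ12 : ζ12 = (kappaF 1 a1 (1 - b1)) ^ 2
        - 2 * kappaF 1 a1 (1 - b1) * kappaF 1 a2 (1 - b2)
        + kappaF 2 a2 (1 - b2))
    (hζ22 : ζ22 = kappaF 2 a2 (1 - b2) - (kappaF 1 a2 (1 - b2)) ^ 2)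
    (hζr : ζr = ζ22 / ζ12)
    (β σ : ℝ) (hσ : 0 < σ) (T1 T2 : ℝ)
    (hT1 : T1 = Real.log σ - β * kappaF 1 a1 (1 - b1))
    (hT2 : T2 = (Real.log σ) ^ 2 - 2 * β * Real.log σ * kappaF 1 a2 (1 - b2)
        + β ^ 2 * kappaF 2 a2 (1 - b2)) :
    0 ≤ T2 - ζr * T1 ^ 2 :=
  frechet_T2_sub_zetaR_T1_sq_nonneg_general a1 a2 b1 b2 h0 h1 h2 h3 h4 ζ12 ζ22 ζr hζ12 hζ22 hζr β σ
    T1 T2 hT1 hT2
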